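/- Let λ₁, λ₂, λ₃, λ₄ > 0 and Λ = diag(λ₁, λ₂, λ₃, λ₄), and let G be the dimension-4 perfect code generation matrix. Then there exist a unitary 4×4 complex matrix Q and an upper triangular 4×4 matrix R all of whose entries are real, with positive diagonal entries, such that ΛG = Q·R. -/

import Mathlib

open Matrix Complex Real

/-- `θ₁ = 2cos(4π/15)`, `θ₂ = 2cos(2π/15)`, `θ₃ = 2cos(16π/15)`, `θ₄ = 2cos(8π/15)`. -/
noncomputable def theta4 : Fin 4 → ℝ :=
  ![2 * Real.cos (4 * Real.pi / 15), 2 * Real.cos (2 * Real.pi / 15),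
    2 * Real.cos (16 * Real.pi / 15), 2 * Real.cos (8 * Real.pi / 15)]

/-- The dimension-4 perfect code generation matrix. -/
noncomputable def perfectG4 : Matrix (Fin 4) (Fin 4) ℂ :=
  Matrix.of fun u v =>
    (1 / (Real.sqrt 15 : ℂ)) *
      (![1 + Complex.I * ((theta4 u : ℂ) ^ 2 - 3),
         (theta4 u : ℂ) + Complex.I * ((theta4 u : ℂ) ^ 3 - 3 * (theta4 u : ℂ)),
         ((theta4 u : ℂ) ^ 3 - 3 * (theta4 u : ℂ)) +
           Complex.I * (-1 + 4 * (theta4 u : ℂ) - (theta4 u : ℂ) ^ 3),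
         (-1 - 3 * (theta4 u : ℂ) + (theta4 u : ℂ) ^ 2 + (theta4 u : ℂ) ^ 3) + Complex.I] v)

/-!
Every row of `G` is a complex multiple of a real row. Each `θ = θ_u` is `2 cos x` with
`cos 5x = −1/2`, hence a root of `X⁵ − 5X³ + 5X + 1 = (X + 1)(X⁴ − X³ − 4X² + 4X + 1)` other
than `−1`. Modulo the quartic, `z_u = (1 + i(θ² − 3))/√15` times `(1, θ, θ³ − 3θ, θ³ + θ² − 3θ − 1)`
is the `u`-th row of `G`, so `ΛG = diag(λ_u z_u / |λ_u z_u|) · diag(|λ_u z_u|) · V(θ) · C` with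
`V(θ)` the Vandermonde matrix of the distinct `θ_u` and `C` constant. The last three factors form
an invertible real matrix; its Gram–Schmidt decomposition `Q₀R₀` gives `ΛG = (diag(…) Q₀) R₀`,
and a unitary diagonal matrix times a real orthogonal one is unitary.
-/

open InnerProductSpace Module

section GramSchmidt

variable {𝕜 E : Type*} [RCLike 𝕜] [NormedAddCommGroup E] [InnerProductSpace 𝕜 E]
  {ι : Type*} [LinearOrder ι] [LocallyFiniteOrderBot ι] [WellFoundedLT ι]

theorem InnerProductSpace.inner_gramSchmidt_self (f : ι → E) (n : ι) :
    inner 𝕜 (gramSchmidt 𝕜 f n) (f n) = (‖gramSchmidt 𝕜 f n‖ : 𝕜) ^ 2 := by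
  conv_lhs => rw [gramSchmidt_def'' 𝕜 f n]
  rw [inner_add_right, inner_sum, Finset.sum_eq_zero, add_zero, inner_self_eq_norm_sq_to_K]
  intro i hi
  rw [inner_smul_right, gramSchmidt_orthogonal 𝕜 f (Finset.mem_Iio.1 hi).ne', mul_zero]

theorem InnerProductSpace.inner_gramSchmidtNormed_self (f : ι → E) (n : ι) :
    inner 𝕜 (gramSchmidtNormed 𝕜 f n) (f n) = ‖gramSchmidt 𝕜 f n‖ := by
  by_cases h : gramSchmidt 𝕜 f n = 0
  · simp [gramSchmidtNormed, h]
  · rw [gramSchmidtNormed, inner_smul_left, inner_gramSchmidt_self]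
    have : (‖gramSchmidt 𝕜 f n‖ : 𝕜) ≠ 0 := by simpa using h
    simp only [map_inv₀, RCLike.conj_ofReal]
    field_simp

open scoped ComplexOrder in
theorem Matrix.exists_mem_unitaryGroup_mul_isUpperTriangular [Fintype ι] [DecidableEq ι]
    (A : Matrix ι ι 𝕜) (hA : IsUnit A) :
    ∃ Q ∈ unitaryGroup ι 𝕜, ∃ R : Matrix ι ι 𝕜,
      R.IsUpperTriangular ∧ (∀ i, 0 < R i i) ∧ A = Q * R := by
  let v : ι → EuclideanSpace 𝕜 ι := fun j => WithLp.toLp 2 (A.col j)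
  have hv : LinearIndependent 𝕜 v :=
    (linearIndependent_cols_iff_isUnit.2 hA).map' (WithLp.linearEquiv 2 𝕜 _).symm.toLinearMap
      (LinearEquiv.ker _)
  have hcard : finrank 𝕜 (EuclideanSpace 𝕜 ι) = Fintype.card ι := finrank_euclideanSpace
  let b := gramSchmidtOrthonormalBasis hcard v
  let e := EuclideanSpace.basisFun ι 𝕜
  refine ⟨e.toBasis.toMatrix b, e.toMatrix_orthonormalBasis_mem_unitary b, b.toBasis.toMatrix v,
    gramSchmidtOrthonormalBasis_inv_isUpperTriangular hcard v, fun i => ?_, ?_⟩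
  · have hb : b i = gramSchmidtNormed 𝕜 v i := by
      refine gramSchmidtOrthonormalBasis_apply hcard ?_
      rw [← norm_ne_zero_iff, gramSchmidtNormed_unit_length i hv]
      exact one_ne_zero
    rw [Basis.toMatrix_apply, OrthonormalBasis.coe_toBasis_repr_apply,
      OrthonormalBasis.repr_apply_apply, hb, inner_gramSchmidtNormed_self, RCLike.ofReal_pos]
    exact norm_pos_iff.2 (gramSchmidt_ne_zero i hv)
  · rw [← b.coe_toBasis, Basis.toMatrix_mul_toMatrix]
    ext i j
    simp [Basis.toMatrix_apply, v, e]

end GramSchmidt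

section Unitary

variable {ι : Type*} [Fintype ι] [DecidableEq ι]

theorem Matrix.diagonal_mem_unitaryGroup {α : Type*} [CommRing α] [StarRing α] {d : ι → α}
    (hd : ∀ i, star (d i) * d i = 1) : diagonal d ∈ unitaryGroup ι α := by
  rw [mem_unitaryGroup_iff', star_eq_conjTranspose, diagonal_conjTranspose, diagonal_mul_diagonal]
  simp [hd]

theorem Matrix.map_ofReal_mem_unitaryGroup {Q : Matrix ι ι ℝ} (hQ : Q ∈ unitaryGroup ι ℝ) :
    Q.map Complex.ofReal ∈ unitaryGroup ι ℂ := by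
  rw [mem_unitaryGroup_iff', star_eq_conjTranspose] at hQ ⊢
  rw [← conjTranspose_map _ (fun x => (Complex.conj_ofReal x).symm)]
  have h := congrArg Complex.ofRealHom.mapMatrix hQ
  rwa [map_mul, map_one] at h

theorem Matrix.exists_mem_unitaryGroup_mul_real_isUpperTriangular [LinearOrder ι]
    [LocallyFiniteOrderBot ι] (z : ι → ℂ) (hz : ∀ i, z i ≠ 0) (M : Matrix ι ι ℝ) (hM : IsUnit M) :
    ∃ Q ∈ unitaryGroup ι ℂ, ∃ R : Matrix ι ι ℝ, R.IsUpperTriangular ∧ (∀ i, 0 < R i i) ∧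
      diagonal z * M.map Complex.ofReal = Q * R.map Complex.ofReal := by
  have hnorm : ∀ i, 0 < ‖z i‖ := fun i => norm_pos_iff.2 (hz i)
  have hB : IsUnit (diagonal (‖z ·‖) * M) :=
    (isUnit_diagonal.2 (Pi.isUnit_iff.2 fun i => (hnorm i).ne'.isUnit)).mul hM
  obtain ⟨Q₀, hQ₀, R, hR, hRpos, hBQR⟩ := exists_mem_unitaryGroup_mul_isUpperTriangular _ hB
  refine ⟨diagonal (fun i => z i / ‖z i‖) * Q₀.map Complex.ofReal,
    mul_mem (diagonal_mem_unitaryGroup fun i => ?_) (map_ofReal_mem_unitaryGroup hQ₀), R, hR,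
    hRpos, ?_⟩
  · rw [RCLike.star_def, RCLike.conj_mul, norm_div, Complex.norm_real, norm_norm,
      div_self (hnorm i).ne']
    simp
  · have map_mul_ofReal : ∀ A B : Matrix ι ι ℝ,
        (A * B).map Complex.ofReal = A.map Complex.ofReal * B.map Complex.ofReal :=
      fun _ _ => Matrix.map_mul (f := Complex.ofRealHom)
    rw [mul_assoc, ← map_mul_ofReal, ← hBQR, map_mul_ofReal, ← mul_assoc,
      diagonal_map Complex.ofReal_zero, diagonal_mul_diagonal]
    congr 2
    ext i
    rw [div_mul_cancel₀ _ (Complex.ofReal_ne_zero.2 (hnorm i).ne')]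

end Unitary

theorem Real.two_cos_five_mul (x : ℝ) :
    2 * cos (5 * x) = (2 * cos x) ^ 5 - 5 * (2 * cos x) ^ 3 + 5 * (2 * cos x) := by
  rw [show 5 * x = 2 * x + 3 * x by ring, cos_add, cos_two_mul, cos_three_mul, sin_two_mul,
    sin_three_mul]
  linear_combination (16 * cos x * sin x ^ 2 + 4 * cos x - 16 * cos x ^ 3) * sin_sq_add_cos_sq x

theorem Real.cos_nat_mul_pi_div_inj {k l n : ℕ} (hk : k ≤ n) (hl : l ≤ n)
    (h : Real.cos (k * π / n) = Real.cos (l * π / n)) : k = l := by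
  rcases n.eq_zero_or_pos with rfl | hn
  · omega
  have hmem : ∀ m : ℕ, m ≤ n → m * π / n ∈ Set.Icc 0 π := fun m hm =>
    ⟨by positivity, div_le_of_le_mul₀ (by positivity) pi_pos.le (by rw [mul_comm]; gcongr)⟩
  have := injOn_cos (hmem k hk) (hmem l hl) h
  rwa [div_left_inj' (by positivity), mul_left_inj' pi_ne_zero, Nat.cast_inj] at this

theorem Real.cos_two_pi_div_three : Real.cos (2 * π / 3) = -(1 / 2) := by
  rw [show 2 * π / 3 = π - π / 3 by ring, cos_pi_sub, cos_pi_div_three]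

-- `2 cos (16π/15) = 2 cos (14π/15)` brings every angle into `[0, π]`, where `cos` is injective.
theorem theta4_eq_two_cos (u : Fin 4) :
    theta4 u = 2 * Real.cos ((![4, 2, 14, 8] u : ℕ) * π / 15) := by
  fin_cases u <;> simp [theta4]
  rw [show 16 * π / 15 = 2 * π - 14 * π / 15 by ring, Real.cos_two_pi_sub]

theorem theta4_injective : Function.Injective theta4 := by
  intro u v h
  rw [theta4_eq_two_cos, theta4_eq_two_cos, mul_right_inj' two_ne_zero] at h
  refine (show Function.Injective ![4, 2, 14, 8] by decide) ?_
  exact cos_nat_mul_pi_div_inj (n := 15) (by fin_cases u <;> simp) (by fin_cases v <;> simp)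
    (by simpa using h)

theorem theta4_ne_neg_one (u : Fin 4) : theta4 u ≠ -1 := by
  have h : 2 * Real.cos ((10 : ℕ) * π / 15) = -1 := by
    rw [show ((10 : ℕ) : ℝ) * π / 15 = 2 * π / 3 by push_cast; ring, cos_two_pi_div_three]
    norm_num
  rw [theta4_eq_two_cos, ← h, ne_eq, mul_right_inj' two_ne_zero]
  intro hcos
  have := cos_nat_mul_pi_div_inj (k := ![4, 2, 14, 8] u) (l := 10) (n := 15)
    (by fin_cases u <;> simp) (by simp) (by simpa using hcos)
  fin_cases u <;> simp at this

theorem theta4_quintic (u : Fin 4) :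
    theta4 u ^ 5 - 5 * theta4 u ^ 3 + 5 * theta4 u + 1 = 0 := by
  have h : Real.cos (5 * ((![4, 2, 14, 8] u : ℕ) * π / 15)) = Real.cos (2 * π / 3) := by
    fin_cases u <;> simp
    · rw [show 5 * (4 * π / 15) = 2 * π - 2 * π / 3 by ring, Real.cos_two_pi_sub]
    · rw [show 5 * (2 * π / 15) = 2 * π / 3 by ring]
    · rw [show 5 * (14 * π / 15) = 2 * π / 3 + 2 * π + 2 * π by ring, Real.cos_add_two_pi,
        Real.cos_add_two_pi]
    · rw [show 5 * (8 * π / 15) = 2 * π / 3 + 2 * π by ring, Real.cos_add_two_pi]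
  rw [theta4_eq_two_cos, ← two_cos_five_mul, h, cos_two_pi_div_three]
  ring

theorem theta4_quartic (u : Fin 4) :
    theta4 u ^ 4 - theta4 u ^ 3 - 4 * theta4 u ^ 2 + 4 * theta4 u + 1 = 0 := by
  have h : (theta4 u + 1) * (theta4 u ^ 4 - theta4 u ^ 3 - 4 * theta4 u ^ 2 + 4 * theta4 u + 1)
      = 0 := by
    linear_combination theta4_quintic u
  exact (mul_eq_zero.1 h).resolve_left fun h' =>
    theta4_ne_neg_one u (eq_neg_of_add_eq_zero_left h')

noncomputable def perfectG4RowScale (u : Fin 4) : ℂ :=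
  (1 + Complex.I * ((theta4 u : ℂ) ^ 2 - 3)) / (Real.sqrt 15 : ℂ)

-- Column `v` lists the coefficients of the `v`-th polynomial `1, X, X³ − 3X, X³ + X² − 3X − 1`.
def perfectG4Coeff : Matrix (Fin 4) (Fin 4) ℝ :=
  !![1, 0, 0, -1; 0, 1, -3, -3; 0, 0, 0, 1; 0, 0, 1, 1]

theorem perfectG4RowScale_ne_zero (u : Fin 4) : perfectG4RowScale u ≠ 0 :=
  div_ne_zero (fun h => by simpa [← Complex.ofReal_pow] using congrArg Complex.re h) (by simp)

theorem perfectG4_eq :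
    perfectG4 = diagonal perfectG4RowScale *
      (vandermonde theta4 * perfectG4Coeff).map Complex.ofReal := by
  ext u v
  have hq : (theta4 u : ℂ) ^ 4 - (theta4 u : ℂ) ^ 3 - 4 * (theta4 u : ℂ) ^ 2
      + 4 * (theta4 u : ℂ) + 1 = 0 := by exact_mod_cast theta4_quartic u
  rw [diagonal_mul, map_apply, mul_apply, Fin.sum_univ_four]
  fin_cases v <;> simp [perfectG4, perfectG4RowScale, perfectG4Coeff, vandermonde]
  · ring
  · ring
  · linear_combination (-(Real.sqrt 15 : ℂ)⁻¹ * Complex.I * (theta4 u + 1)) * hq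
  · linear_combination (-(Real.sqrt 15 : ℂ)⁻¹ * Complex.I * (theta4 u + 2)) * hq

theorem isUnit_vandermonde_theta4_mul_perfectG4Coeff :
    IsUnit (vandermonde theta4 * perfectG4Coeff) := by
  rw [isUnit_iff_isUnit_det, det_mul, isUnit_iff_ne_zero]
  refine mul_ne_zero (det_vandermonde_ne_zero_iff.2 theta4_injective) ?_
  simp [perfectG4Coeff, det_succ_row_zero, Fin.sum_univ_succ]

/-- For `λ₁,…,λ₄ > 0` and `Λ = diag(λ₁,…,λ₄)`, there is a QR decomposition `ΛG = QR`
with `Q` unitary and `R` upper triangular with real entries and positive diagonal. -/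
theorem stmt15 (lam : Fin 4 → ℝ) (hlam : ∀ u, 0 < lam u) :
    ∃ Q R : Matrix (Fin 4) (Fin 4) ℂ,
      Qᴴ * Q = 1 ∧
      (∀ u w : Fin 4, w < u → R u w = 0) ∧
      (∀ u w : Fin 4, (R u w).im = 0) ∧
      (∀ u : Fin 4, 0 < (R u u).re) ∧
      Matrix.diagonal (fun u => (lam u : ℂ)) * perfectG4 = Q * R := by
  obtain ⟨Q, hQ, R, hR, hRpos, hQR⟩ := exists_mem_unitaryGroup_mul_real_isUpperTriangular
    (fun u => lam u * perfectG4RowScale u)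
    (fun u => mul_ne_zero (ofReal_ne_zero.2 (hlam u).ne') (perfectG4RowScale_ne_zero u))
    _ isUnit_vandermonde_theta4_mul_perfectG4Coeff
  refine ⟨Q, R.map ofReal, mem_unitaryGroup_iff'.1 hQ, fun u w hwu => by simp [hR hwu],
    fun u w => by simp, fun u => by simpa using hRpos u, ?_⟩
  rw [perfectG4_eq, ← mul_assoc, diagonal_mul_diagonal, hQR]
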